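/- arXiv:2307.00312 — 2 statements merged into one kernel-verified Lean document; each statement's English description precedes it below -/
import Mathlib

section
/- Let d ≥ 1 and m ≥ 0 be integers, let x_1,…,x_{n−1} be distinct points in ℝ^d and q_1,…,q_n nonzero reals. Then for Lebesgue-almost every x_n ∈ ℝ^d \ {x_1,…,x_{n−1}}, every critical point of the potential V defined by the charges (x_1,q_1),…,(x_n,q_n) is non-degenerate, i.e. the Hessian of V at every critical point is invertible. -/
open MeasureTheory InnerProductSpace Set Filter Topology

noncomputable section AuxPot

variable {F : Type*} [NormedAddCommGroup F] [InnerProductSpace ℝ F]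

local notation "⟪" x ", " y "⟫" => @inner ℝ _ _ x y

def kap (m : ℕ) : ℝ := if m = 0 then 1 else -(m : ℝ)

lemma kap_ne_zero (m : ℕ) : kap m ≠ 0 := by
  unfold kap
  split
  · norm_num
  · simp_all

def gmap (m : ℕ) (v : F) : F := (‖v‖ ^ (m+2) : ℝ)⁻¹ • v

def gderiv (m : ℕ) (v : F) : F →L[ℝ] F :=
  (‖v‖ ^ (m+2) : ℝ)⁻¹ • ContinuousLinearMap.id ℝ F
    + ((-(m+2 : ℝ) * (‖v‖ ^ (m+4) : ℝ)⁻¹) • (innerSL ℝ v)).smulRight v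

lemma hasFDerivAt_normsq (x p : F) :
    HasFDerivAt (fun p : F => ‖p - x‖ ^ 2) (2 • innerSL ℝ (p - x)) p := by
  have h := ((hasFDerivAt_id p).sub_const x).norm_sq
  simpa using h

lemma sq_rpow_aux {r : ℝ} (hr : 0 < r) (c : ℝ) : (r ^ 2) ^ c = r ^ (2 * c) := by
  rw [← Real.rpow_natCast r 2, ← Real.rpow_mul hr.le]
  norm_num

lemma rpow_neg_nat_aux {r : ℝ} (hr : 0 < r) (k : ℕ) : r ^ (-(k : ℝ)) = (r ^ k)⁻¹ := by
  rw [Real.rpow_neg hr.le, Real.rpow_natCast]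

lemma kernel_hasFDerivAt (m : ℕ) (x p : F) (h : p ≠ x) :
    HasFDerivAt (fun p : F => if m = 0 then Real.log ‖p - x‖ else (‖p - x‖ ^ m)⁻¹)
      (innerSL ℝ ((kap m * ((‖p - x‖ : ℝ) ^ (m + 2))⁻¹) • (p - x))) p := by
  have hr : (0 : ℝ) < ‖p - x‖ := by
    rw [norm_pos_iff]; exact sub_ne_zero.2 h
  have hs : (‖p - x‖ : ℝ) ^ 2 ≠ 0 := by positivity
  rcases eq_or_ne m 0 with hm | hm
  · subst hm
    have hfun : (fun p : F => if (0:ℕ) = 0 then Real.log ‖p - x‖ else (‖p - x‖ ^ 0)⁻¹)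
        = fun p : F => 2⁻¹ * Real.log (‖p - x‖ ^ 2) := by
      funext p'
      simp [Real.log_pow]
    rw [hfun]
    have h1 := ((Real.hasDerivAt_log hs).comp_hasFDerivAt p (hasFDerivAt_normsq x p)).const_mul 2⁻¹
    refine h1.congr_fderiv ?_
    symm
    ext u
    simp only [kap, if_pos rfl, ContinuousLinearMap.coe_smul', Pi.smul_apply,
      innerSL_apply_apply]
    rw [real_inner_smul_left]
    field_simp
    simp only [if_true, smul_eq_mul, zero_add]
    field_simp
    rw [two_nsmul, mul_two]
  · have hfun : (fun p : F => if m = 0 then Real.log ‖p - x‖ else (‖p - x‖ ^ m)⁻¹)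
        = fun p : F => (‖p - x‖ ^ 2) ^ (-(m : ℝ) / 2) := by
      funext p'
      rw [if_neg hm]
      rcases eq_or_lt_of_le (norm_nonneg (p' - x)) with h0 | h0
      · rw [← h0]
        rw [zero_pow hm, zero_pow (two_ne_zero), inv_zero, Real.zero_rpow]
        exact div_ne_zero (neg_ne_zero.2 (Nat.cast_ne_zero.mpr hm)) two_ne_zero
      · rw [sq_rpow_aux h0]
        have : 2 * (-(m:ℝ)/2) = -(m:ℝ) := by ring
        rw [this, rpow_neg_nat_aux h0]
    rw [hfun]
    have h1 := (Real.hasDerivAt_rpow_const (p := -(m:ℝ)/2) (Or.inl hs)).comp_hasFDerivAt p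
      (hasFDerivAt_normsq x p)
    refine h1.congr_fderiv ?_
    symm
    ext u
    simp only [ContinuousLinearMap.coe_smul', Pi.smul_apply, innerSL_apply_apply, smul_eq_mul]
    rw [real_inner_smul_left]
    have e1 : ((‖p - x‖ : ℝ) ^ 2) ^ (-(m:ℝ)/2 - 1) = (‖p - x‖ ^ (m + 2))⁻¹ := by
      rw [sq_rpow_aux hr]
      have : 2 * (-(m:ℝ)/2 - 1) = -((m : ℝ) + 2) := by ring
      rw [this]
      have : ((m : ℝ) + 2) = ((m + 2 : ℕ) : ℝ) := by push_cast; ring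
      rw [this, rpow_neg_nat_aux hr]
    rw [e1]
    simp only [kap, if_neg hm]
    ring

def wmap (m : ℕ) {n : ℕ} (x : Fin n → F) (q : Fin n → ℝ) (p : F) : F :=
  ∑ i, (q i * ((‖p - x i‖ : ℝ) ^ (m + 2))⁻¹) • (p - x i)

lemma hasGradientAt_of_innerSL {F : Type*} [NormedAddCommGroup F] [InnerProductSpace ℝ F]
    [CompleteSpace F] {f : F → ℝ} {v p : F}
    (h : HasFDerivAt f (innerSL ℝ v) p) : HasGradientAt f v p := by
  rw [hasGradientAt_iff_hasFDerivAt]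
  have hv : (toDual ℝ F) v = innerSL ℝ v := by ext u; simp
  rw [hv]; exact h

end AuxPot

/-- The potential generated by the charges `(x 0, q 0), …, (x (n-1), q (n-1))` together with
an extra charge `qa` placed at the point `a`. -/
noncomputable def potVext (d n m : ℕ) (x : Fin n → EuclideanSpace ℝ (Fin d))
    (q : Fin n → ℝ) (a : EuclideanSpace ℝ (Fin d)) (qa : ℝ) :
    EuclideanSpace ℝ (Fin d) → ℝ := fun p =>
  if m = 0 then (∑ i, q i * Real.log ‖p - x i‖) + qa * Real.log ‖p - a‖
  else (∑ i, q i / ‖p - x i‖ ^ m) + qa / ‖p - a‖ ^ m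

section Main

variable {d n m : ℕ}

local notation "E" => EuclideanSpace ℝ (Fin d)

lemma potVext_eq (x : Fin n → E) (q : Fin n → ℝ) (a : E) (qa : ℝ) :
    potVext d n m x q a qa = fun p =>
      (∑ i, q i * (if m = 0 then Real.log ‖p - x i‖ else (‖p - x i‖ ^ m)⁻¹))
        + qa * (if m = 0 then Real.log ‖p - a‖ else (‖p - a‖ ^ m)⁻¹) := by
  funext p
  unfold potVext
  rcases eq_or_ne m 0 with hm | hm <;> simp [hm, div_eq_mul_inv]

lemma pot_hasGradientAt (x : Fin n → E) (q : Fin n → ℝ) (a : E) (qa : ℝ) (p : E)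
    (hp : ∀ i, p ≠ x i) (hpa : p ≠ a) :
    HasGradientAt (potVext d n m x q a qa)
      (kap m • (wmap m x q p + qa • gmap m (p - a))) p := by
  apply hasGradientAt_of_innerSL
  rw [potVext_eq]
  have hterm : ∀ i : Fin n, HasFDerivAt
      (fun p : E => q i * (if m = 0 then Real.log ‖p - x i‖ else (‖p - x i‖ ^ m)⁻¹))
      (q i • innerSL ℝ ((kap m * ((‖p - x i‖ : ℝ) ^ (m + 2))⁻¹) • (p - x i))) p :=
    fun i => (kernel_hasFDerivAt m (x i) p (hp i)).const_mul (q i)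
  have ha : HasFDerivAt
      (fun p : E => qa * (if m = 0 then Real.log ‖p - a‖ else (‖p - a‖ ^ m)⁻¹))
      (qa • innerSL ℝ ((kap m * ((‖p - a‖ : ℝ) ^ (m + 2))⁻¹) • (p - a))) p :=
    (kernel_hasFDerivAt m a p hpa).const_mul qa
  have hsum : HasFDerivAt
      (fun p : E => (∑ i, q i * (if m = 0 then Real.log ‖p - x i‖ else (‖p - x i‖ ^ m)⁻¹))
        + qa * (if m = 0 then Real.log ‖p - a‖ else (‖p - a‖ ^ m)⁻¹))
      ((∑ i, q i • innerSL ℝ ((kap m * ((‖p - x i‖ : ℝ) ^ (m + 2))⁻¹) • (p - x i)))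
        + qa • innerSL ℝ ((kap m * ((‖p - a‖ : ℝ) ^ (m + 2))⁻¹) • (p - a))) p :=
    (HasFDerivAt.fun_sum (fun i _ => hterm i)).add ha
  refine hsum.congr_fderiv ?_
  symm
  ext u
  simp only [ContinuousLinearMap.add_apply, ContinuousLinearMap.coe_sum', Finset.sum_apply,
    ContinuousLinearMap.coe_smul', Pi.smul_apply, innerSL_apply_apply, smul_eq_mul]
  rw [real_inner_smul_left, inner_add_left, real_inner_smul_left]
  unfold wmap gmap
  rw [sum_inner, mul_add, Finset.mul_sum]
  congr 1
  · refine Finset.sum_congr rfl fun i _ => ?_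
    rw [real_inner_smul_left, real_inner_smul_left]
    ring
  · rw [real_inner_smul_left, real_inner_smul_left]
    ring

section Aux2

variable {F : Type*} [NormedAddCommGroup F] [InnerProductSpace ℝ F]

lemma gmap_ne_zero (m : ℕ) {v : F} (hv : v ≠ 0) : gmap m v ≠ 0 := by
  unfold gmap
  have hr : (0:ℝ) < ‖v‖ := norm_pos_iff.2 hv
  exact smul_ne_zero (by positivity) hv

lemma norm_gmap (m : ℕ) {v : F} (hv : v ≠ 0) : ‖gmap m v‖ = ((‖v‖ ^ (m+1) : ℝ))⁻¹ := by
  have hr : (0:ℝ) < ‖v‖ := norm_pos_iff.2 hv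
  unfold gmap
  rw [norm_smul, Real.norm_eq_abs, abs_inv, abs_pow, abs_of_pos hr]
  rw [pow_succ]
  field_simp

lemma hasFDerivAt_invpow (m : ℕ) {v : F} (hv : v ≠ 0) :
    HasFDerivAt (fun w : F => ((‖w‖ : ℝ) ^ (m+2))⁻¹)
      (innerSL ℝ ((-((m:ℝ)+2) * ((‖v‖ : ℝ) ^ (m+4))⁻¹) • v)) v := by
  have h := kernel_hasFDerivAt (m+2) (0 : F) v (by simpa using hv)
  simp only [sub_zero, if_neg (by omega : ¬ m + 2 = 0)] at h
  have h4 : m + 2 + 2 = m + 4 := by omega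
  rw [h4] at h
  have hk : kap (m+2) = -((m:ℝ)+2) := by
    unfold kap
    rw [if_neg (by omega : ¬ m + 2 = 0)]
    push_cast
    ring
  rw [hk] at h
  exact h

lemma gmap_hasFDerivAt (m : ℕ) {v : F} (hv : v ≠ 0) :
    HasFDerivAt (gmap m) (gderiv m v) v := by
  have h := (hasFDerivAt_invpow m hv).fun_smul (hasFDerivAt_id v)
  have hfun : (fun w : F => ((‖w‖ : ℝ) ^ (m+2))⁻¹ • id w) = gmap m := by
    funext w; simp [gmap]
  rw [hfun] at h
  have hE : (((‖v‖ : ℝ) ^ (m+2))⁻¹ • ContinuousLinearMap.id ℝ F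
      + (innerSL ℝ ((-((m:ℝ)+2) * ((‖v‖ : ℝ) ^ (m+4))⁻¹) • v)).smulRight (id v)) = gderiv m v := by
    ext u
    simp [gderiv, ContinuousLinearMap.smulRight_apply, real_inner_smul_left]
  rwa [hE] at h

lemma gderiv_ker (m : ℕ) {v u : F} (hv : v ≠ 0) (h : gderiv m v u = 0) : u = 0 := by
  have hr : (0:ℝ) < ‖v‖ := norm_pos_iff.2 hv
  have happ : gderiv m v u
      = ((‖v‖ : ℝ) ^ (m+2))⁻¹ • u + ((-((m:ℝ)+2) * ((‖v‖ : ℝ) ^ (m+4))⁻¹) * ⟪v, u⟫_ℝ) • v := by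
    unfold gderiv
    simp [ContinuousLinearMap.smulRight_apply]
  rw [happ] at h
  have hinner : ⟪v, u⟫_ℝ = 0 := by
    have h2 := congrArg (fun y => ⟪v, y⟫_ℝ) h
    simp only [inner_add_right, real_inner_smul_right, inner_zero_right] at h2
    rw [real_inner_self_eq_norm_sq] at h2
    have h44 : (‖v‖ : ℝ) ^ (m+4) = ‖v‖ ^ (m+2) * ‖v‖ ^ 2 := by ring
    rw [h44] at h2
    have hne : ((‖v‖ : ℝ) ^ (m+2)) ≠ 0 := by positivity
    have hne2 : ((‖v‖ : ℝ) ^ 2) ≠ 0 := by positivity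
    rw [mul_inv] at h2
    have h3 : ((‖v‖:ℝ)^(m+2))⁻¹ * (((‖v‖:ℝ)^2)⁻¹ * ((‖v‖:ℝ)^2)) = ((‖v‖:ℝ)^(m+2))⁻¹ := by
      field_simp
    have h5 : ⟪v, u⟫_ℝ * (((‖v‖:ℝ)^(m+2))⁻¹ * (1 - ((m:ℝ)+2))) = 0 := by
      rw [mul_sub, mul_one]
      linear_combination h2 + ((m:ℝ)+2) * ⟪v, u⟫_ℝ * h3
    have h6 : ((‖v‖:ℝ)^(m+2))⁻¹ * (1 - ((m:ℝ)+2)) ≠ 0 := by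
      apply mul_ne_zero (by positivity)
      intro hc
      have : (m:ℝ) + 1 = 0 := by linarith
      have : (0:ℝ) ≤ (m:ℝ) := Nat.cast_nonneg m
      linarith
    exact (mul_eq_zero.1 h5).resolve_right h6
  rw [hinner] at h
  simp only [mul_zero, zero_smul, add_zero] at h
  have hne : ((‖v‖ : ℝ) ^ (m+2))⁻¹ ≠ 0 := by positivity
  exact (smul_eq_zero.1 h).resolve_left hne

lemma gderiv_bijective [FiniteDimensional ℝ F] (m : ℕ) {v : F} (hv : v ≠ 0) :
    Function.Bijective (gderiv m v) := by
  have hinj : Function.Injective (gderiv m v) := by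
    intro u1 u2 h12
    have : gderiv m v (u1 - u2) = 0 := by rw [map_sub, h12, sub_self]
    have := gderiv_ker m hv this
    exact sub_eq_zero.1 this
  refine ⟨hinj, ?_⟩
  have := (LinearMap.injective_iff_surjective
    (f := (gderiv m v : F →L[ℝ] F).toLinearMap)).1 hinj
  exact this

end Aux2

section Aux3

variable {F : Type*} [NormedAddCommGroup F] [InnerProductSpace ℝ F]

noncomputable def Amap (m : ℕ) {n : ℕ} (x : Fin n → F) (q : Fin n → ℝ) (qa : ℝ) (p : F) : F :=
  p + (qa⁻¹ * ((|qa| / ‖wmap m x q p‖) ^ (((m:ℝ)+2)/((m:ℝ)+1)))) • wmap m x q p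

lemma wmap_eq (m : ℕ) {n : ℕ} (x : Fin n → F) (q : Fin n → ℝ) :
    wmap m x q = fun p => ∑ i, q i • gmap m (p - x i) := by
  funext p
  unfold wmap gmap
  refine Finset.sum_congr rfl fun i _ => ?_
  rw [smul_smul]

lemma hasFDerivAt_wmap (m : ℕ) {n : ℕ} (x : Fin n → F) (q : Fin n → ℝ) (p : F)
    (hp : ∀ i, p ≠ x i) :
    HasFDerivAt (wmap m x q) (∑ i, q i • (gderiv m (p - x i))) p := by
  rw [wmap_eq]
  apply HasFDerivAt.fun_sum
  intro i _
  have hv : p - x i ≠ 0 := sub_ne_zero.2 (hp i)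
  have hg := (gmap_hasFDerivAt m hv).comp p ((hasFDerivAt_id p).sub_const (x i))
  simpa using hg.fun_const_smul (q i)

lemma crit_amap_eq (m : ℕ) {n : ℕ} (x : Fin n → F) (q : Fin n → ℝ) {qa : ℝ} (hqa : qa ≠ 0)
    {p a : F} (hpa : p ≠ a) (hcrit : wmap m x q p = (-qa) • gmap m (p - a)) :
    Amap m x q qa p = a := by
  have hv : p - a ≠ 0 := sub_ne_zero.2 hpa
  have hr : (0:ℝ) < ‖p - a‖ := norm_pos_iff.2 hv
  have hqa' : (0:ℝ) < |qa| := abs_pos.2 hqa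
  have hnw : ‖wmap m x q p‖ = |qa| * ((‖p - a‖ ^ (m+1) : ℝ))⁻¹ := by
    rw [hcrit, norm_smul, Real.norm_eq_abs, abs_neg, norm_gmap m hv]
  have hdiv : |qa| / ‖wmap m x q p‖ = ‖p - a‖ ^ (m+1) := by
    rw [hnw]
    field_simp
  have hexp : ((‖p - a‖ ^ (m+1) : ℝ)) ^ (((m:ℝ)+2)/((m:ℝ)+1)) = ‖p - a‖ ^ (m+2) := by
    rw [← Real.rpow_natCast ‖p - a‖ (m+1), ← Real.rpow_mul hr.le]
    have : ((m+1 : ℕ) : ℝ) * (((m:ℝ)+2)/((m:ℝ)+1)) = ((m+2 : ℕ) : ℝ) := by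
      have hm1 : ((m:ℝ)+1) ≠ 0 := by positivity
      push_cast
      field_simp
    rw [this, Real.rpow_natCast]
  unfold Amap
  rw [hdiv, hexp, hcrit]
  unfold gmap
  have hsc : qa⁻¹ * ‖p - a‖ ^ (m+2) * -qa * ((‖p - a‖ ^ (m+2) : ℝ))⁻¹ = -1 := by
    field_simp
  rw [smul_smul, smul_smul, hsc]
  module

lemma amap_zero (m : ℕ) {n : ℕ} (x : Fin n → F) (q : Fin n → ℝ) {qa : ℝ} (hqa : qa ≠ 0)
    {p : F} (hw : wmap m x q p ≠ 0) :
    wmap m x q p + qa • gmap m (p - Amap m x q qa p) = 0 := by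
  have hnw : (0:ℝ) < ‖wmap m x q p‖ := norm_pos_iff.2 hw
  have hqa' : (0:ℝ) < |qa| := abs_pos.2 hqa
  set w := wmap m x q p with hwdef
  set s : ℝ := |qa| / ‖w‖ with hsdef
  have hs : 0 < s := div_pos hqa' hnw
  set t : ℝ := s ^ (((m:ℝ)+2)/((m:ℝ)+1)) with htdef
  have ht : 0 < t := Real.rpow_pos_of_pos hs _
  have hsub : p - Amap m x q qa p = -((qa⁻¹ * t) • w) := by
    unfold Amap
    module
  have hts : t ^ (m+1) = s ^ (m+2) := by
    rw [htdef, ← Real.rpow_natCast (s ^ (((m:ℝ)+2)/((m:ℝ)+1))) (m+1), ← Real.rpow_mul hs.le]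
    have : (((m:ℝ)+2)/((m:ℝ)+1)) * ((m+1 : ℕ) : ℝ) = ((m+2 : ℕ) : ℝ) := by
      have hm1 : ((m:ℝ)+1) ≠ 0 := by positivity
      push_cast
      field_simp
    rw [this, Real.rpow_natCast]
  rw [hsub]
  unfold gmap
  rw [norm_neg, norm_smul, Real.norm_eq_abs]
  have habs : |qa⁻¹ * t| = |qa|⁻¹ * t := by
    rw [abs_mul, abs_inv, abs_of_pos ht]
  rw [habs]
  have hkey : |qa|⁻¹ * t * ‖w‖ = t / s := by
    rw [hsdef]
    field_simp
  rw [hkey]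
  have hscal : qa * ((((t / s) ^ (m+2) : ℝ))⁻¹ * (qa⁻¹ * t)) = 1 := by
    have hts2 : (t / s) ^ (m+2) ≠ 0 := by positivity
    have h1 : ((t / s) ^ (m+2) : ℝ) = t ^ (m+2) / s ^ (m+2) := by
      rw [div_pow]
    rw [h1]
    have h2 : (t : ℝ) ^ (m+2) = t ^ (m+1) * t := by ring
    rw [h2, hts]
    field_simp
  have hstep : qa • ((((t / s) ^ (m+2) : ℝ))⁻¹ : ℝ) • -((qa⁻¹ * t) • w)
      = -((qa * ((((t / s) ^ (m+2) : ℝ))⁻¹ * (qa⁻¹ * t))) • w) := by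
    module
  rw [hstep, hscal, one_smul]
  simp

end Aux3

section Aux4

variable {F : Type*} [NormedAddCommGroup F] [InnerProductSpace ℝ F]

lemma differentiableAt_amap (m : ℕ) {n : ℕ} (x : Fin n → F) (q : Fin n → ℝ) {qa : ℝ}
    (hqa : qa ≠ 0) {p : F} (hp : ∀ i, p ≠ x i) (hw : wmap m x q p ≠ 0) :
    DifferentiableAt ℝ (Amap m x q qa) p := by
  have hdw : DifferentiableAt ℝ (wmap m x q) p := (hasFDerivAt_wmap m x q p hp).differentiableAt
  have hnw : ‖wmap m x q p‖ ≠ 0 := norm_ne_zero_iff.2 hw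
  have hnorm : DifferentiableAt ℝ (fun p => ‖wmap m x q p‖) p := hdw.norm ℝ hw
  have hbase : DifferentiableAt ℝ (fun p => |qa| / ‖wmap m x q p‖) p := by
    simp only [div_eq_mul_inv]
    exact (hnorm.inv hnw).const_mul _
  have hbne : |qa| / ‖wmap m x q p‖ ≠ 0 := by
    apply div_ne_zero (abs_ne_zero.2 hqa) hnw
  have hrpow : DifferentiableAt ℝ
      (fun p => (|qa| / ‖wmap m x q p‖) ^ (((m:ℝ)+2)/((m:ℝ)+1))) p :=
    hbase.rpow_const (Or.inl hbne)
  have hcoef : DifferentiableAt ℝ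
      (fun p => qa⁻¹ * ((|qa| / ‖wmap m x q p‖) ^ (((m:ℝ)+2)/((m:ℝ)+1)))) p :=
    hrpow.const_mul _
  exact differentiableAt_fun_id.add (hcoef.fun_smul hdw)

lemma bij_of_det_ne_zero {F : Type*} [NormedAddCommGroup F] [NormedSpace ℝ F]
    [FiniteDimensional ℝ F] (f : F →L[ℝ] F) (h : f.det ≠ 0) : Function.Bijective f := by
  have := LinearMap.equivOfDetNeZero f.toLinearMap h
  have hco : ⇑(LinearMap.equivOfDetNeZero f.toLinearMap h) = ⇑f := by
    have h1 := LinearEquiv.coe_ofIsUnitDet (f := f.toLinearMap)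
      (v := Module.finBasis ℝ F) (v' := Module.finBasis ℝ F)
    exact congrArg DFunLike.coe (h1 _)
  rw [← hco]
  exact (LinearMap.equivOfDetNeZero f.toLinearMap h).bijective

lemma smul_bijective {F : Type*} [NormedAddCommGroup F] [NormedSpace ℝ F]
    {c : ℝ} (hc : c ≠ 0) : Function.Bijective (fun y : F => c • y) :=
  (Homeomorph.smulOfNeZero c hc).bijective

end Aux4

/-- For almost every position `a` of the last charge, the potential has no degenerate
critical points: at every critical point, the Hessian (the derivative of the gradient)
is invertible. -/
theorem stmt5 (d n m : ℕ) (hd : 1 ≤ d)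
    (x : Fin n → EuclideanSpace ℝ (Fin d)) (hx : Function.Injective x)
    (q : Fin n → ℝ) (hq : ∀ i, q i ≠ 0) (qa : ℝ) (hqa : qa ≠ 0) :
    ∀ᵐ a ∂(volume : Measure (EuclideanSpace ℝ (Fin d))),
      a ∉ Set.range x →
      ∀ p : EuclideanSpace ℝ (Fin d), p ∉ Set.range x → p ≠ a →
        gradient (potVext d n m x q a qa) p = 0 →
        Function.Bijective (fderiv ℝ (gradient (potVext d n m x q a qa)) p) := by
  classical
  set A : EuclideanSpace ℝ (Fin d) → EuclideanSpace ℝ (Fin d) := Amap m x q qa with hA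
  set S : Set (EuclideanSpace ℝ (Fin d)) :=
    {p | ((∀ i, p ≠ x i) ∧ wmap m x q p ≠ 0) ∧ ¬ Function.Bijective (fderiv ℝ A p)} with hS
  have hnull : volume (A '' S) = 0 := by
    apply addHaar_image_eq_zero_of_det_fderivWithin_eq_zero volume
      (f' := fun p => fderiv ℝ A p)
    · intro p hp
      exact ((differentiableAt_amap m x q hqa hp.1.1 hp.1.2).hasFDerivAt).hasFDerivWithinAt
    · intro p hp
      by_contra hdet
      exact hp.2 (bij_of_det_ne_zero _ hdet)
  have hae : ∀ᵐ a ∂(volume : Measure (EuclideanSpace ℝ (Fin d))), a ∉ A '' S :=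
    measure_eq_zero_iff_ae_notMem.1 hnull
  filter_upwards [hae] with a hanotin _ p hpx hpa hcrit
  have hpx' : ∀ i, p ≠ x i := by
    intro i h
    exact hpx ⟨i, h.symm⟩
  -- gradient formula at the critical point
  have hgrad := pot_hasGradientAt (m := m) x q a qa p hpx' hpa
  have h0 : kap m • (wmap m x q p + qa • gmap m (p - a)) = 0 := by
    rw [← hgrad.gradient]; exact hcrit
  have hsum0 : wmap m x q p + qa • gmap m (p - a) = 0 :=
    (smul_eq_zero.1 h0).resolve_left (kap_ne_zero m)
  have hcrit' : wmap m x q p = (-qa) • gmap m (p - a) := by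
    rw [neg_smul]
    exact eq_neg_of_add_eq_zero_left hsum0
  have hwne : wmap m x q p ≠ 0 := by
    intro hw0
    rw [hw0, zero_add] at hsum0
    exact (gmap_ne_zero m (sub_ne_zero.2 hpa)) ((smul_eq_zero.1 hsum0).resolve_left hqa)
  have hAp : A p = a := crit_amap_eq m x q hqa hpa hcrit'
  have hbijA : Function.Bijective (fderiv ℝ A p) := by
    by_contra hc
    exact hanotin ⟨p, ⟨⟨hpx', hwne⟩, hc⟩, hAp⟩
  have hDA := (differentiableAt_amap m x q hqa hpx' hwne).hasFDerivAt
  set A' := fderiv ℝ A p with hA'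
  -- the function h vanishes near p
  have hcont : ContinuousAt (wmap m x q) p :=
    (hasFDerivAt_wmap m x q p hpx').differentiableAt.continuousAt
  have hwne_ev : ∀ᶠ p' in 𝓝 p, wmap m x q p' ≠ 0 := hcont.eventually_ne hwne
  have hzero : (fun p' => wmap m x q p' + qa • gmap m (p' - A p'))
      =ᶠ[𝓝 p] (fun _ => (0 : EuclideanSpace ℝ (Fin d))) := by
    filter_upwards [hwne_ev] with p' hp'
    exact amap_zero m x q hqa hp'
  have hW := hasFDerivAt_wmap m x q p hpx'
  have hvpa : p - A p ≠ 0 := by rw [hAp]; exact sub_ne_zero.2 hpa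
  have hcompo : HasFDerivAt (fun p' => p' - A p')
      (ContinuousLinearMap.id ℝ (EuclideanSpace ℝ (Fin d)) - A') p :=
    (hasFDerivAt_id p).sub hDA
  have hgm := (gmap_hasFDerivAt m hvpa).comp p hcompo
  have hch : HasFDerivAt (fun p' => wmap m x q p' + qa • gmap m (p' - A p'))
      ((∑ i, q i • gderiv m (p - x i)) + qa • ((gderiv m (p - A p)).comp
        (ContinuousLinearMap.id ℝ (EuclideanSpace ℝ (Fin d)) - A'))) p :=
    hW.add (hgm.const_smul qa)
  have hzero' : HasFDerivAt (fun p' => wmap m x q p' + qa • gmap m (p' - A p'))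
      (0 : EuclideanSpace ℝ (Fin d) →L[ℝ] EuclideanSpace ℝ (Fin d)) p :=
    (hasFDerivAt_const (0 : EuclideanSpace ℝ (Fin d)) p).congr_of_eventuallyEq hzero
  have hrel : (∑ i, q i • gderiv m (p - x i)) + qa • ((gderiv m (p - A p)).comp
      (ContinuousLinearMap.id ℝ (EuclideanSpace ℝ (Fin d)) - A')) = 0 :=
    hch.unique hzero'
  rw [hAp] at hrel
  -- the gradient of the potential near p
  have hxev : ∀ᶠ p' in 𝓝 p, ∀ i, p' ≠ x i := by
    rw [eventually_all]
    exact fun i => eventually_ne_nhds (hpx' i)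
  have hgradeq : (gradient (potVext d n m x q a qa))
      =ᶠ[𝓝 p] (fun p' => kap m • (wmap m x q p' + qa • gmap m (p' - a))) := by
    filter_upwards [hxev, eventually_ne_nhds hpa] with p' h1 h2
    exact (pot_hasGradientAt (m := m) x q a qa p' h1 h2).gradient
  have hfd : fderiv ℝ (gradient (potVext d n m x q a qa)) p
      = fderiv ℝ (fun p' => kap m • (wmap m x q p' + qa • gmap m (p' - a))) p :=
    hgradeq.fderiv_eq
  have hsub2 : HasFDerivAt (fun p' : EuclideanSpace ℝ (Fin d) => p' - a)
      (ContinuousLinearMap.id ℝ (EuclideanSpace ℝ (Fin d))) p := by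
    simpa using (hasFDerivAt_id p).sub_const a
  have hg2 := (gmap_hasFDerivAt m (sub_ne_zero.2 hpa)).comp p hsub2
  have hRHS : HasFDerivAt (fun p' => kap m • (wmap m x q p' + qa • gmap m (p' - a)))
      (kap m • ((∑ i, q i • gderiv m (p - x i)) + qa • ((gderiv m (p - a)).comp
        (ContinuousLinearMap.id ℝ (EuclideanSpace ℝ (Fin d)))))) p :=
    (hW.add (hg2.const_smul qa)).const_smul (kap m)
  rw [hfd, hRHS.fderiv]
  -- identify the Hessian with a composition of bijections
  have hgoal : ⇑(kap m • ((∑ i, q i • gderiv m (p - x i)) + qa • ((gderiv m (p - a)).comp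
        (ContinuousLinearMap.id ℝ (EuclideanSpace ℝ (Fin d))))))
      = (fun y : EuclideanSpace ℝ (Fin d) => (kap m * qa) • y) ∘ ⇑(gderiv m (p - a)) ∘ ⇑A' := by
    funext u
    have h1 : ((∑ i, q i • gderiv m (p - x i)) + qa • ((gderiv m (p - a)).comp
        (ContinuousLinearMap.id ℝ (EuclideanSpace ℝ (Fin d)) - A'))) u = 0 := by
      rw [hrel]; rfl
    simp only [ContinuousLinearMap.add_apply, ContinuousLinearMap.coe_smul', Pi.smul_apply,
      ContinuousLinearMap.coe_comp', Function.comp_apply, ContinuousLinearMap.coe_sub',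
      Pi.sub_apply, ContinuousLinearMap.coe_id', id_eq, map_sub] at h1 ⊢
    have h2 : ((∑ i, q i • gderiv m (p - x i)) : _ →L[ℝ] _) u
        = -(qa • (gderiv m (p - a) u - gderiv m (p - a) (A' u))) :=
      eq_neg_of_add_eq_zero_left h1
    rw [h2]
    module
  rw [hgoal]
  exact (smul_bijective (mul_ne_zero (kap_ne_zero m) hqa)).comp
    ((gderiv_bijective m (sub_ne_zero.2 hpa)).comp hbijA)

end Main
end

section
/- Let d ≥ 1, m ≥ 0 be integers, x_1,…,x_{n−1} distinct points in ℝ^d, q_1,…,q_n nonzero reals, and let U(p,a) = V(p) where V is the potential of the charges (x_1,q_1),…,(x_{n−1},q_{n−1}),(a,q_n), defined for p,a ∈ ℝ^d with p ∉ {a, x_1,…,x_{n−1}}. Then the d×d matrix M with entries M_{kj} = ∂²U/∂a_k∂p_j equals c(m)·q_n·‖p−a‖^{−(m+2)}·(I − (m+2)·v v^T), where v = (p−a)/‖p−a‖, c(m) = m for m ≠ 0 and c(0) = −1; in particular M has rank d. -/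
/-- `U p a` is the potential, evaluated at `p`, generated by the charges
`(x 0, q 0), …, (x (n-1), q (n-1))` together with a charge `qa` placed at `a`. -/
noncomputable def Upot (d n m : ℕ) (x : Fin n → EuclideanSpace ℝ (Fin d))
    (q : Fin n → ℝ) (qa : ℝ) (p a : EuclideanSpace ℝ (Fin d)) : ℝ :=
  if m = 0 then (∑ i, q i * Real.log ‖p - x i‖) + qa * Real.log ‖p - a‖
  else (∑ i, q i / ‖p - x i‖ ^ m) + qa / ‖p - a‖ ^ m


open scoped RealInnerProductSpace

variable {d : ℕ}

noncomputable def phiP (d m : ℕ) (y : EuclideanSpace ℝ (Fin d)) : ℝ :=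
  if m = 0 then Real.log ‖y‖ else (‖y‖ ^ m)⁻¹

lemma hasFDerivAt_phiP (m : ℕ) {y₀ : EuclideanSpace ℝ (Fin d)} (h : y₀ ≠ 0) :
    HasFDerivAt (phiP d m) (((if m = 0 then 1 else -(m : ℝ)) * (‖y₀‖ ^ (m + 2))⁻¹) •
      innerSL ℝ y₀) y₀ := by
  have hn : ‖y₀‖ ≠ 0 := norm_ne_zero_iff.mpr h
  have hnp : (0:ℝ) < ‖y₀‖ := norm_pos_iff.mpr h
  have hsq : (‖y₀‖ ^ 2) ≠ 0 := pow_ne_zero _ hn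
  have h1 : HasFDerivAt (fun y : EuclideanSpace ℝ (Fin d) => ‖y‖ ^ 2) (2 • innerSL ℝ y₀) y₀ :=
    (hasStrictFDerivAt_norm_sq y₀).hasFDerivAt
  rcases eq_or_ne m 0 with hm | hm
  · subst hm
    have h2 := ((Real.hasDerivAt_log hsq).comp_hasFDerivAt y₀ h1).const_mul (2⁻¹ : ℝ)
    have heq : (phiP d 0) = fun y : EuclideanSpace ℝ (Fin d) => (2⁻¹ : ℝ) * Real.log (‖y‖ ^ 2) := by
      funext y; simp only [phiP, if_pos rfl, Real.log_pow]; push_cast; ring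
    rw [heq]
    refine h2.congr_fderiv ?_
    ext w
    simp [smul_smul]
    ring
  · have h2 := ((Real.hasDerivAt_rpow_const (p := -(m : ℝ)/2) (Or.inl hsq)).comp_hasFDerivAt
      y₀ h1)
    have heq : (phiP d m) = fun y : EuclideanSpace ℝ (Fin d) => (‖y‖ ^ 2) ^ (-(m : ℝ)/2) := by
      funext y
      simp only [phiP, if_neg hm]
      rcases eq_or_ne y 0 with rfl | hy
      · have hmne : -(m:ℝ)/2 ≠ 0 := by
          simp [div_eq_zero_iff]
          exact_mod_cast hm
        simp [zero_pow hm, Real.zero_rpow hmne]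
      · have hyn : (0:ℝ) < ‖y‖ := norm_pos_iff.mpr hy
        rw [← Real.rpow_natCast ‖y‖ 2, ← Real.rpow_mul hyn.le, ← Real.rpow_natCast ‖y‖ m,
          ← Real.rpow_neg hyn.le]
        congr 1
        push_cast
        ring
    rw [heq]
    refine h2.congr_fderiv ?_
    ext w
    have key : ((‖y₀‖ ^ 2 : ℝ)) ^ (-(m:ℝ)/2 - 1) = (‖y₀‖ ^ (m + 2))⁻¹ := by
      rw [← Real.rpow_natCast ‖y₀‖ 2, ← Real.rpow_mul hnp.le, ← Real.rpow_natCast ‖y₀‖ (m+2),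
        ← Real.rpow_neg hnp.le]
      congr 1
      push_cast
      ring
    simp [smul_smul, key, hm]
    ring
lemma upot_eq (d n m : ℕ) (x : Fin n → EuclideanSpace ℝ (Fin d)) (q : Fin n → ℝ) (qa : ℝ)
    (p' b : EuclideanSpace ℝ (Fin d)) :
    Upot d n m x q qa p' b = (∑ i, q i * phiP d m (p' - x i)) + qa * phiP d m (p' - b) := by
  unfold Upot phiP
  rcases eq_or_ne m 0 with rfl | hm
  · simp
  · simp [hm, div_eq_mul_inv]

lemma hasFDerivAt_last (d m : ℕ) (qa : ℝ) (p b : EuclideanSpace ℝ (Fin d)) (hb : p ≠ b) :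
    HasFDerivAt (fun p' => qa * phiP d m (p' - b))
      ((qa * ((if m = 0 then 1 else -(m : ℝ)) * (‖p - b‖ ^ (m + 2))⁻¹)) • innerSL ℝ (p - b)) p := by
  have h0 : HasFDerivAt (fun p' : EuclideanSpace ℝ (Fin d) => p' - b)
      (ContinuousLinearMap.id ℝ _) p := (hasFDerivAt_id p).sub_const b
  have h1 := ((hasFDerivAt_phiP m (sub_ne_zero.mpr hb)).comp p h0).const_mul qa
  exact h1.congr_fderiv (by ext w; simp [smul_smul])

lemma fderiv_upot_fst (d n m : ℕ) (x : Fin n → EuclideanSpace ℝ (Fin d)) (q : Fin n → ℝ)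
    (qa : ℝ) (p : EuclideanSpace ℝ (Fin d)) (hp : ∀ i, p ≠ x i)
    (b : EuclideanSpace ℝ (Fin d)) (hb : p ≠ b) :
    fderiv ℝ (fun p' => Upot d n m x q qa p' b) p
      = fderiv ℝ (fun p' => ∑ i, q i * phiP d m (p' - x i)) p
        + (qa * ((if m = 0 then 1 else -(m : ℝ)) * (‖p - b‖ ^ (m + 2))⁻¹)) • innerSL ℝ (p - b) := by
  have hsum : DifferentiableAt ℝ (fun p' => ∑ i, q i * phiP d m (p' - x i)) p := by
    apply DifferentiableAt.fun_sum
    intro i _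
    exact (((hasFDerivAt_phiP m (sub_ne_zero.mpr (hp i))).comp p
      ((hasFDerivAt_id p).sub_const (x i))).const_mul (q i)).differentiableAt
  have hlast := hasFDerivAt_last d m qa p b hb
  have heq : (fun p' => Upot d n m x q qa p' b)
      = fun p' => (∑ i, q i * phiP d m (p' - x i)) + qa * phiP d m (p' - b) := by
    funext p'
    exact upot_eq d n m x q qa p' b
  rw [heq, fderiv_fun_add hsum hlast.differentiableAt, hlast.fderiv]


/-- The `d × d` matrix of mixed second partial derivatives `M k j = ∂²U/∂a_k∂p_j`
equals `c(m)·qₙ·‖p−a‖^{−(m+2)}·(I − (m+2)·v vᵀ)` where `v = (p−a)/‖p−a‖`, and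
in particular it has rank `d`. -/
theorem stmt6 (d n m : ℕ) (hd : 1 ≤ d)
    (x : Fin n → EuclideanSpace ℝ (Fin d)) (hx : Function.Injective x)
    (q : Fin n → ℝ) (hq : ∀ i, q i ≠ 0) (qa : ℝ) (hqa : qa ≠ 0)
    (p a : EuclideanSpace ℝ (Fin d)) (hpa : p ≠ a)
    (hp : p ∉ Set.range x) (ha : a ∉ Set.range x)
    (M : Matrix (Fin d) (Fin d) ℝ)
    (hM : ∀ k j, M k j =
      fderiv ℝ (fun b => fderiv ℝ (fun p' => Upot d n m x q qa p' b) p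
        (EuclideanSpace.single j 1)) a (EuclideanSpace.single k 1))
    (v : Fin d → ℝ) (hv : ∀ k, v k = (p k - a k) / ‖p - a‖) :
    M = ((if m = 0 then (-1 : ℝ) else (m : ℝ)) * qa / ‖p - a‖ ^ (m + 2)) •
        ((1 : Matrix (Fin d) (Fin d) ℝ) - ((m : ℝ) + 2) • Matrix.vecMulVec v v) ∧
      M.rank = d := by
  classical
  have hpx : ∀ i, p ≠ x i := fun i hi => hp ⟨i, hi.symm⟩
  have hy : p - a ≠ 0 := sub_ne_zero.mpr hpa
  have hr : (0:ℝ) < ‖p - a‖ := norm_pos_iff.mpr hy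
  set C : ℝ := if m = 0 then 1 else -(m:ℝ) with hC
  have hm2 : m + 2 ≠ 0 := by omega
  have hMeq : M = ((if m = 0 then (-1 : ℝ) else (m : ℝ)) * qa / ‖p - a‖ ^ (m + 2)) •
      ((1 : Matrix (Fin d) (Fin d) ℝ) - ((m : ℝ) + 2) • Matrix.vecMulVec v v) := by
    ext k j
    set ej := EuclideanSpace.single (𝕜 := ℝ) j (1:ℝ) with hej
    set Sj : ℝ := fderiv ℝ (fun p' => ∑ i, q i * phiP d m (p' - x i)) p ej with hSj
    set g : EuclideanSpace ℝ (Fin d) → ℝ := fun b =>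
      Sj + qa * (C * (phiP d (m+2) (p - b) * (innerSL ℝ ej) (p - b))) with hg
    have hev : (fun b => fderiv ℝ (fun p' => Upot d n m x q qa p' b) p ej) =ᶠ[nhds a] g := by
      have hopen : ∀ᶠ b in nhds a, b ≠ p :=
        isOpen_compl_singleton.eventually_mem (by simpa using fun h => hpa h.symm)
      filter_upwards [hopen] with b hb
      rw [fderiv_upot_fst d n m x q qa p hpx b (fun h => hb h.symm)]
      simp only [hg, ContinuousLinearMap.add_apply, ContinuousLinearMap.smul_apply,
        innerSL_apply_apply, smul_eq_mul, phiP, if_neg hm2, hSj]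
      rw [real_inner_comm]
      ring
    have hsub : HasFDerivAt (fun b : EuclideanSpace ℝ (Fin d) => p - b)
        (-(ContinuousLinearMap.id ℝ _)) a := (hasFDerivAt_id a).const_sub p
    have h1 : HasFDerivAt (fun b => phiP d (m+2) (p - b))
        ((((if m + 2 = 0 then 1 else -((m+2 : ℕ) : ℝ)) * (‖p - a‖ ^ (m + 2 + 2))⁻¹) •
          innerSL ℝ (p - a)).comp (-(ContinuousLinearMap.id ℝ _))) a :=
      (hasFDerivAt_phiP (m+2) hy).comp a hsub
    have h2 : HasFDerivAt (fun b => (innerSL ℝ ej) (p - b))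
        ((innerSL ℝ ej).comp (-(ContinuousLinearMap.id ℝ _))) a :=
      ((innerSL ℝ ej).hasFDerivAt).comp a hsub
    have h3 := ((h1.mul h2).const_mul C).const_mul qa
    have h4 := h3.const_add Sj
    have h5 : HasFDerivAt g _ a := h4
    rw [hM k j, hev.fderiv_eq, h5.fderiv]
    simp only [if_neg hm2, ContinuousLinearMap.smul_apply, ContinuousLinearMap.add_apply,
      ContinuousLinearMap.comp_apply, ContinuousLinearMap.neg_apply,
      ContinuousLinearMap.coe_id', id_eq, innerSL_apply_apply, smul_eq_mul, phiP,
      Matrix.smul_apply, Matrix.sub_apply, Matrix.one_apply, Matrix.vecMulVec_apply,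
      hej, EuclideanSpace.inner_single_left, EuclideanSpace.single_apply, map_one,
      one_mul, hv, inner_neg_right, PiLp.neg_apply]
    have hinr : ∀ w : EuclideanSpace ℝ (Fin d), ∀ i : Fin d,
        inner (𝕜 := ℝ) w (EuclideanSpace.single (𝕜 := ℝ) i (1:ℝ)) = w i := by
      intro w i; rw [EuclideanSpace.inner_single_right]; simp
    have hsubap : ∀ i : Fin d, (p - a) i = p i - a i := fun i => rfl
    rcases eq_or_ne m 0 with rfl | hm
    · simp only [hC, if_pos rfl, hinr, hsubap]
      by_cases hkj : k = j
      · subst hkj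
        simp only [if_pos rfl, if_true]
        field_simp
        ring
      · have hjk : ¬ (j = k) := fun h => hkj h.symm
        simp only [eq_false hkj, eq_false hjk, if_false]
        field_simp
        simp only [if_true]
        ring
    · simp only [hC, if_neg hm, hinr, hsubap]
      by_cases hkj : k = j
      · subst hkj
        simp only [if_pos rfl, if_true]
        field_simp
        push_cast
        ring
      · have hjk : ¬ (j = k) := fun h => hkj h.symm
        simp only [eq_false hkj, eq_false hjk, if_false]
        field_simp
        push_cast
        ring
  refine ⟨hMeq, ?_⟩
  have hnorm : ‖p - a‖ ^ 2 = ∑ i, (p i - a i) * (p i - a i) := by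
    rw [← real_inner_self_eq_norm_sq]
    simp [PiLp.inner_apply, RCLike.inner_apply]
    rw [EuclideanSpace.norm_eq, Real.sq_sqrt (by positivity)]
    simp [sq_abs, sq]
  have hv1 : ∑ i, v i * v i = 1 := by
    have hvv : ∀ i, v i * v i = (p i - a i) * (p i - a i) / ‖p - a‖ ^ 2 := by
      intro i; rw [hv, div_mul_div_comm, ← pow_two ‖p - a‖]
    rw [Finset.sum_congr rfl (fun i _ => hvv i), ← Finset.sum_div, ← hnorm]
    exact div_self (by positivity)
  set P := Matrix.vecMulVec v v with hP
  have hPP : P * P = P := by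
    ext i j
    simp only [Matrix.mul_apply, Matrix.vecMulVec_apply, hP]
    have hl : ∀ l, v i * v l * (v l * v j) = v l * v l * (v i * v j) := fun l => by ring
    rw [Finset.sum_congr rfl (fun l _ => hl l), ← Finset.sum_mul, hv1, one_mul]
  have key : ∀ t u : ℝ, t * u = t + u →
      ((1 : Matrix (Fin d) (Fin d) ℝ) - t • P) * (1 - u • P) = 1 := by
    intro t u htu
    have h1 : (t • P) * (u • P) = (t * u) • P := by
      rw [Matrix.smul_mul, Matrix.mul_smul, smul_smul, hPP]
    rw [mul_sub, sub_mul, sub_mul, h1, htu, add_smul]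
    simp only [one_mul, mul_one]
    abel
  have hm1 : ((m : ℝ) + 1) ≠ 0 := by positivity
  have htu : ((m : ℝ) + 2) * (((m : ℝ) + 2) / ((m : ℝ) + 1))
      = ((m : ℝ) + 2) + ((m : ℝ) + 2) / ((m : ℝ) + 1) := by
    field_simp; ring
  set s : ℝ := (if m = 0 then (-1 : ℝ) else (m : ℝ)) * qa / ‖p - a‖ ^ (m + 2) with hs
  have hc' : (if m = 0 then (-1 : ℝ) else (m : ℝ)) ≠ 0 := by
    rcases eq_or_ne m 0 with rfl | hm
    · norm_num
    · simp [hm, Nat.cast_ne_zero.mpr hm]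
  have hs0 : s ≠ 0 := div_ne_zero (mul_ne_zero hc' hqa) (by positivity)
  set N : Matrix (Fin d) (Fin d) ℝ :=
    s⁻¹ • ((1 : Matrix (Fin d) (Fin d) ℝ) - (((m : ℝ) + 2) / ((m : ℝ) + 1)) • P) with hN
  have hMN : M * N = 1 := by
    rw [hMeq, hN, Matrix.smul_mul, Matrix.mul_smul, smul_smul,
      mul_inv_cancel₀ hs0, key _ _ htu, one_smul]
  have : Invertible M := invertibleOfRightInverse M N hMN
  rw [Matrix.rank_of_isUnit M (isUnit_of_invertible M), Fintype.card_fin]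
end
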